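/- arXiv:0807.4550 — 3 statements merged into one kernel-verified Lean document; each statement's English description precedes it below -/
import Mathlib

section
/- The bijection ζ : C(G,H,A)·ι(e_G) → Fun_H(G, A·e_H), N ↦ N(δ), is an isomorphism of (ℂG, Z(A))-bimodules: ζ(ι(g)∘N) = ι(g)(ζ(N)) for every g ∈ G, where ℂG acts on C(G,H,A)·ι(e_G) by left multiplication via ι and on Fun_H(G, A·e_H) by (ι(g)f)(w) = f(wg); and ζ(N·z) = ζ(N)·z for every z in the centre Z(A) of A, where z acts on C(G,H,A) by postcomposing with pointwise right multiplication by z, and on Fun_H(G, A·e_H) by pointwise right multiplication. -/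
open scoped BigOperators

section Setup
variable {G : Type} [Group G] [Fintype G] {H : Subgroup G} [Fintype H]
variable {A : Type} [Ring A] [Algebra ℂ A]

/-- `Fun_H(G,A)`: the `H`-equivariant `A`-valued functions on `G`,
as a right `A`-module (i.e. a module over `Aᵐᵒᵖ`). -/
def FunH (φ : H →* Aˣ) : Submodule Aᵐᵒᵖ (G → A) where
  carrier := {f | ∀ (h : H) (g : G), f (↑h * g) = (φ h : A) * f g}
  add_mem' := by
    intro f g hf hg h x
    simp only [Pi.add_apply, hf h x, hg h x, mul_add]
  zero_mem' := by intro h x; simp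
  smul_mem' := by
    intro a f hf h x
    simp only [Pi.smul_apply, MulOpposite.smul_eq_mul_unop, hf h x, mul_assoc]

variable (φ : H →* Aˣ)

/-- `ι(w)`, the endomorphism `f ↦ (g ↦ f (g * w))` of the right `A`-module `Fun_H(G,A)`. -/
def iota (w : G) : Module.End Aᵐᵒᵖ (FunH (G := G) φ) where
  toFun f := ⟨fun g => (f : G → A) (g * w), fun h x => by
    simpa only [mul_assoc] using f.2 h (x * w)⟩
  map_add' f₁ f₂ := rfl
  map_smul' a f := rfl

/-- `ι(e_G)` where `e_G = |G|⁻¹ ∑_{g ∈ G} g` is the symmetrizing idempotent of `ℂG`. -/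
noncomputable def iotaEG : Module.End Aᵐᵒᵖ (FunH (G := G) φ) :=
  (Fintype.card G : ℂ)⁻¹ • ∑ g : G, iota φ g

/-- The idempotent `e_H = |H|⁻¹ ∑_{h ∈ H} φ(h) ∈ A`. -/
noncomputable def eH : A := (Fintype.card H : ℂ)⁻¹ • ∑ h : H, (φ h : A)

lemma phi_mul_eH (h : H) : (φ h : A) * eH φ = eH φ := by
  unfold eH
  rw [mul_smul_comm, Finset.mul_sum]
  congr 1
  exact Fintype.sum_equiv (Equiv.mulLeft h) _ _ (fun x => by
    simp [Equiv.mulLeft, ← Units.val_mul])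

/-- The element `δ ∈ Fun_H(G,A)`, the constant function with value `e_H`. -/
noncomputable def delta : FunH (G := G) φ := ⟨fun _ => eH φ, fun h g => (phi_mul_eH φ h).symm⟩

/-- `η(f)`: the right `A`-module endomorphism `h ↦ (w ↦ f(w) ⬝ ∑_{g ∈ G} h(g))`. -/
def eta (f : FunH (G := G) φ) : Module.End Aᵐᵒᵖ (FunH (G := G) φ) where
  toFun h := ⟨fun w => (f : G → A) w * ∑ g : G, (h : G → A) g, fun hh x => by
    simp only []
    rw [f.2 hh x, mul_assoc]⟩
  map_add' h₁ h₂ := by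
    ext w
    simp [Finset.sum_add_distrib, mul_add]
  map_smul' a h := by
    ext w
    simp [MulOpposite.smul_eq_mul_unop, ← Finset.sum_mul, mul_assoc]

/-- Right multiplication by a central element `z`, as an endomorphism of `Fun_H(G,A)`. -/
def rmul (z : A) (hz : z ∈ Set.center A) : Module.End Aᵐᵒᵖ (FunH (G := G) φ) where
  toFun f := ⟨fun w => (f : G → A) w * z, fun h x => by simp only []; rw [f.2 h x, mul_assoc]⟩
  map_add' f₁ f₂ := by ext w; simp [add_mul]
  map_smul' a f := by
    ext w
    simp only [Submodule.coe_smul, Pi.smul_apply, MulOpposite.smul_eq_mul_unop,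
      mul_assoc]
    rw [hz.comm]; rfl
  
end Setup

section Aux
variable {G : Type} [Group G] [Fintype G] {H : Subgroup G} [Fintype H]
variable {A : Type} [Ring A] [Algebra ℂ A] (φ : H →* Aˣ)

lemma eH_idem : eH φ * eH φ = eH φ := by
  nth_rewrite 1 [eH]
  rw [smul_mul_assoc, Finset.sum_mul]
  simp only [phi_mul_eH]
  rw [Finset.sum_const, Finset.card_univ, ← Nat.cast_smul_eq_nsmul ℂ, smul_smul,
    inv_mul_cancel₀ (by exact_mod_cast Fintype.card_ne_zero), one_smul]

lemma eH_mul_sum (f : FunH (G := G) φ) :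
    eH φ * ∑ g, (f : G → A) g = ∑ g, (f : G → A) g := by
  have key : ∀ h : H, (φ h : A) * ∑ g, (f : G → A) g = ∑ g, (f : G → A) g := by
    intro h
    rw [Finset.mul_sum]
    exact Fintype.sum_equiv (Equiv.mulLeft (h : G)) _ _ (fun g => (f.2 h g).symm)
  rw [eH, smul_mul_assoc, Finset.sum_mul]
  simp only [key]
  rw [Finset.sum_const, Finset.card_univ, ← Nat.cast_smul_eq_nsmul ℂ, smul_smul,
    inv_mul_cancel₀ (by exact_mod_cast Fintype.card_ne_zero), one_smul]

lemma iotaEG_coe (f : FunH (G := G) φ) (w : G) :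
    ((iotaEG φ f : FunH (G := G) φ) : G → A) w
      = (Fintype.card G : ℂ)⁻¹ • ∑ g, (f : G → A) g := by
  have h : ∑ g, (f : G → A) (w * g) = ∑ g, (f : G → A) g :=
    Fintype.sum_equiv (Equiv.mulLeft w) _ _ (fun g => rfl)
  simp [iotaEG, iota, h]

lemma iotaEG_eq_smul_delta (f : FunH (G := G) φ) :
    iotaEG φ f
      = MulOpposite.op ((Fintype.card G : ℂ)⁻¹ • ∑ g, (f : G → A) g) • delta φ := by
  apply Subtype.ext; funext w
  rw [iotaEG_coe]
  show _ = (fun w => (delta φ : G → A) w * ((Fintype.card G : ℂ)⁻¹ • ∑ g, (f : G → A) g)) w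
  simp only [delta, mul_smul_comm, eH_mul_sum]

lemma iotaEG_delta : iotaEG φ (delta φ) = delta φ := by
  apply Subtype.ext; funext w
  rw [iotaEG_coe]
  show _ = eH φ
  have : ((delta φ : FunH (G := G) φ) : G → A) = fun _ => eH φ := rfl
  rw [this, Finset.sum_const, Finset.card_univ, ← Nat.cast_smul_eq_nsmul ℂ, smul_smul,
    inv_mul_cancel₀ (by exact_mod_cast Fintype.card_ne_zero), one_smul]

end Aux

section Statements
variable {G : Type} [Group G] [Fintype G] {H : Subgroup G} [Fintype H]
variable {A : Type} [Ring A] [Algebra ℂ A]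

/-- The set of functions in `Fun_H(G,A)` all of whose values lie in the
right ideal `A·e_H`, i.e. `Fun_H(G, A·e_H)`. -/
def FunHeSet (φ : H →* Aˣ) : Set (FunH (G := G) φ) :=
  {f | ∀ g : G, ∃ a : A, (f : G → A) g = a * eH φ}

/-- The bijection `ζ : C(G,H,A)·ι(e_G) → Fun_H(G, A·e_H)`, `N ↦ N(δ)`,
is an isomorphism of `(ℂG, Z(A))`-bimodules: it intertwines left multiplication by `ι(g)`
with the action `(ι(g)f)(w) = f(wg)`, and it intertwines the right `Z(A)`-action
(postcomposition with pointwise right multiplication by a central `z`) with pointwise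
right multiplication by `z`. -/
theorem statement2 (φ : H →* Aˣ) :
    Set.BijOn (fun N : Module.End Aᵐᵒᵖ (FunH (G := G) φ) => N (delta φ))
      {N | ∃ M, N = M * iotaEG φ} (FunHeSet φ) ∧
    (∀ (g : G) (N : Module.End Aᵐᵒᵖ (FunH (G := G) φ)),
      (iota φ g * N) (delta φ) = iota φ g (N (delta φ))) ∧
    (∀ (z : A) (hz : z ∈ Set.center A) (N : Module.End Aᵐᵒᵖ (FunH (G := G) φ)),
      (rmul φ z hz * N) (delta φ) = MulOpposite.op z • (N (delta φ))) := by
  classical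
  have hδ : delta φ = MulOpposite.op (eH φ) • delta φ := by
    apply Subtype.ext; funext w
    show eH φ = eH φ * eH φ
    rw [eH_idem]
  refine ⟨⟨?_, ?_, ?_⟩, fun g N => rfl, fun z hz N => rfl⟩
  · -- MapsTo
    intro N _ g
    show ∃ a : A, (N (delta φ) : G → A) g = a * eH φ
    refine ⟨(N (delta φ) : G → A) g, ?_⟩
    have h2 : N (delta φ) = MulOpposite.op (eH φ) • N (delta φ) := by
      conv_lhs => rw [hδ]
      rw [map_smul]
    conv_lhs => rw [h2]
    rfl
  · -- InjOn
    intro N₁ hN₁ N₂ hN₂ heq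
    obtain ⟨M₁, rfl⟩ := hN₁
    obtain ⟨M₂, rfl⟩ := hN₂
    have key : ∀ (M : Module.End Aᵐᵒᵖ (FunH (G := G) φ)) (f : FunH (G := G) φ),
        (M * iotaEG φ) f
          = MulOpposite.op ((Fintype.card G : ℂ)⁻¹ • ∑ g, (f : G → A) g) •
              (M * iotaEG φ) (delta φ) := by
      intro M f
      have h1 : (M * iotaEG φ) (delta φ) = M (delta φ) := by
        show M (iotaEG φ (delta φ)) = M (delta φ)
        rw [iotaEG_delta]
      rw [h1]
      show M (iotaEG φ f) = _
      rw [iotaEG_eq_smul_delta, map_smul]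
    have heq' : (M₁ * iotaEG φ) (delta φ) = (M₂ * iotaEG φ) (delta φ) := heq
    ext f
    rw [key M₁ f, key M₂ f, heq']
  · -- SurjOn
    intro f hf
    have hfe : ∀ w : G, (f : G → A) w * eH φ = (f : G → A) w := by
      intro w
      obtain ⟨a, ha⟩ := hf w
      rw [ha, mul_assoc, eH_idem]
    set N : Module.End Aᵐᵒᵖ (FunH (G := G) φ) :=
      (Fintype.card G : ℂ)⁻¹ • eta φ f with hN
    have hetaEG : eta φ f * iotaEG φ = eta φ f := by
      ext h : 1
      apply Subtype.ext; funext w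
      show (f : G → A) w * ∑ g, ((iotaEG φ h : FunH (G := G) φ) : G → A) g
        = (f : G → A) w * ∑ g, (h : G → A) g
      congr 1
      have : ∀ g : G, ((iotaEG φ h : FunH (G := G) φ) : G → A) g
          = (Fintype.card G : ℂ)⁻¹ • ∑ g', (h : G → A) g' := fun g => iotaEG_coe φ h g
      simp only [this, Finset.sum_const, Finset.card_univ, ← Nat.cast_smul_eq_nsmul ℂ,
        smul_smul]
      rw [mul_inv_cancel₀ (by exact_mod_cast Fintype.card_ne_zero), one_smul]
    have hNmem : N ∈ {N | ∃ M, N = M * iotaEG φ} := by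
      refine ⟨N, ?_⟩
      rw [hN, smul_mul_assoc, hetaEG]
    refine ⟨N, hNmem, ?_⟩
    show N (delta φ) = f
    apply Subtype.ext; funext w
    have h1 : ((eta φ f (delta φ) : FunH (G := G) φ) : G → A) w
        = (Fintype.card G : ℂ) • (f : G → A) w := by
      show (f : G → A) w * ∑ _g : G, eH φ = _
      rw [Finset.sum_const, Finset.card_univ, ← Nat.cast_smul_eq_nsmul ℂ, mul_smul_comm,
        hfe]
    show (Fintype.card G : ℂ)⁻¹ • ((eta φ f (delta φ) : FunH (G := G) φ) : G → A) w
      = (f : G → A) w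
    rw [h1, smul_smul, inv_mul_cancel₀ (by exact_mod_cast Fintype.card_ne_zero), one_smul]

end Statements
end

section
/- Let R be an associative unital ring and e ∈ R an idempotent such that the map σ : Z(R) → eRe, σ(z) = z·e, is a ring isomorphism onto eRe. Let m be an ideal of the commutative ring Z(R) and let I be the two-sided ideal of R generated by m. Then σ descends to a ring isomorphism Z(R)/m ≅ (eRe)/(I ∩ eRe), and hence Z(R)/m is isomorphic as a ring to ē(R/I)ē, the corner ring of the quotient R/I at the image ē of e. -/
variable {R : Type} [Ring R]

/-- The corner `eRe = {e·r·e : r ∈ R}` of a ring `R` at an idempotent `e`,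
realized as `{x : R // e * x * e = x}`. -/
def Corner (e : R) : Type _ := {x : R // e * x * e = x}

namespace Corner

variable (e : R) [he : Fact (e * e = e)]

lemma e_mul_coe (x : Corner e) : e * x.1 = x.1 := by
  conv_lhs => rw [← x.2]
  rw [← mul_assoc, ← mul_assoc, he.out]
  exact x.2

lemma coe_mul_e (x : Corner e) : x.1 * e = x.1 := by
  conv_lhs => rw [← x.2]
  rw [mul_assoc, he.out]
  exact x.2

instance : Add (Corner e) :=
  ⟨fun x y => ⟨x.1 + y.1, by rw [mul_add, add_mul, x.2, y.2]⟩⟩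

instance : Zero (Corner e) := ⟨⟨0, by simp⟩⟩

instance : Neg (Corner e) := ⟨fun x => ⟨-x.1, by simpa using x.2⟩⟩

instance : Mul (Corner e) :=
  ⟨fun x y => ⟨x.1 * y.1, by
    rw [mul_assoc, mul_assoc, coe_mul_e e y, ← mul_assoc, e_mul_coe e x]⟩⟩

/-- The corner ring `eRe` is unital with unit element `e`. -/
instance : One (Corner e) := ⟨⟨e, by rw [he.out, he.out]⟩⟩

/-- The corner `eRe` of a ring at an idempotent `e` is a ring, with multiplication
inherited from `R` and unit element `e`. -/
instance instRing : Ring (Corner e) where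
  nsmul n x := ⟨n • x.1, by rw [mul_smul_comm, smul_mul_assoc, x.2]⟩
  zsmul z x := ⟨z • x.1, by rw [mul_smul_comm, smul_mul_assoc, x.2]⟩
  nsmul_zero x := Subtype.ext (zero_nsmul x.1)
  nsmul_succ n x := Subtype.ext (succ_nsmul x.1 n)
  zsmul_zero' x := Subtype.ext (zero_zsmul x.1)
  zsmul_succ' n x := Subtype.ext
    (show (Int.ofNat (n + 1)) • x.1 = Int.ofNat n • x.1 + x.1 by
      simp [add_zsmul]; noncomm_ring)
  zsmul_neg' n x := Subtype.ext
    (show (Int.negSucc n) • x.1 = -((n.succ : ℤ) • x.1) by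
      simp [negSucc_zsmul]; noncomm_ring)
  add_assoc a b c := Subtype.ext (add_assoc a.1 b.1 c.1)
  zero_add a := Subtype.ext (zero_add a.1)
  add_zero a := Subtype.ext (add_zero a.1)
  add_comm a b := Subtype.ext (add_comm a.1 b.1)
  neg_add_cancel a := Subtype.ext (neg_add_cancel a.1)
  mul_assoc a b c := Subtype.ext (mul_assoc a.1 b.1 c.1)
  one_mul a := Subtype.ext (e_mul_coe e a)
  mul_one a := Subtype.ext (coe_mul_e e a)
  left_distrib a b c := Subtype.ext (mul_add a.1 b.1 c.1)
  right_distrib a b c := Subtype.ext (add_mul a.1 b.1 c.1)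
  zero_mul a := Subtype.ext (zero_mul a.1)
  mul_zero a := Subtype.ext (mul_zero a.1)

end Corner

/-- The map `σ : Z(R) → eRe`, `σ(z) = z·e`, as a ring homomorphism. -/
def sigmaHom (e : R) [he : Fact (e * e = e)] : Subring.center R →+* Corner e where
  toFun z := ⟨z.1 * e, by
    rw [← mul_assoc, ← z.2.comm e, mul_assoc, he.out, mul_assoc, he.out]⟩
  map_one' := Subtype.ext (one_mul e)
  map_mul' z w := Subtype.ext (by
    show (z.1 * w.1) * e = (z.1 * e) * (w.1 * e)
    rw [mul_assoc z.1 e, ← mul_assoc e w.1 e, ← w.2.comm e, mul_assoc w.1 e e, he.out,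
      ← mul_assoc])
  map_zero' := Subtype.ext (zero_mul e)
  map_add' z w := Subtype.ext (add_mul z.1 w.1 e)

/-! Because the generators of `I` are central, the compression `x ↦ e·x·e` sends `I` into
`σ(m)`: for `z ∈ m` and `a, b ∈ R`, `e·(a z b)·e = z·(e·ab·e) = σ(z u)` where `σ(u) = e·ab·e`.
Hence `σ(z) = z·e ∈ I` iff `z ∈ m`, so `m` is the kernel of both `Z(R) → eRe/(I ∩ eRe)` and
`Z(R) → ē(R/I)ē`. Both maps are surjective because `σ` is, so both induce isomorphisms out
of `Z(R)/m`. -/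

lemma TwoSidedIdeal.coe_quotient_eq_zero_iff {S : Type*} [Ring S] (I : TwoSidedIdeal S) (x : S) :
    (x : I.ringCon.Quotient) = 0 ↔ x ∈ I := by
  rw [← RingCon.coe_zero, RingCon.eq, I.rel_iff, sub_zero]

lemma RingHom.exists_quotientEquiv_of_surjective {A B : Type*} [CommRing A] [Ring B]
    (f : A →+* B) (hf : Function.Surjective f) (m : Ideal A) (hker : ∀ a, f a = 0 ↔ a ∈ m) :
    ∃ τ : A ⧸ m ≃+* B, ∀ a, τ (Ideal.Quotient.mk m a) = f a :=
  ⟨(Ideal.quotEquivOfEq (Ideal.ext hker).symm).trans (f.quotientKerEquivOfSurjective hf),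
    fun _ => rfl⟩

namespace Corner

variable (e : R) [he : Fact (e * e = e)]

def compress : R →+ Corner e where
  toFun x := ⟨e * x * e, by rw [← mul_assoc, ← mul_assoc, he.out, mul_assoc, he.out]⟩
  map_zero' := Subtype.ext (show e * 0 * e = 0 by rw [mul_zero, zero_mul])
  map_add' x y := Subtype.ext (show e * (x + y) * e = e * x * e + e * y * e by
    rw [mul_add, add_mul])

lemma compress_val (x : Corner e) : compress e x.1 = x := Subtype.ext x.2

lemma sigmaHom_mul_compress (z : Subring.center R) (x : R) :
    sigmaHom e z * compress e x = compress e (z.1 * x) := by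
  apply Subtype.ext
  show z.1 * e * (e * x * e) = e * (z.1 * x) * e
  simp only [mul_assoc]
  rw [← mul_assoc e e, he.out, ← mul_assoc, ← mul_assoc e, Subring.mem_center_iff.mp z.2 e]

variable (J : TwoSidedIdeal R) [Fact ((e : J.ringCon.Quotient) * e = e)]

def quotientMap : Corner e →+* Corner (e : J.ringCon.Quotient) where
  toFun x := ⟨(x.1 : J.ringCon.Quotient), by rw [← RingCon.coe_mul, ← RingCon.coe_mul, x.2]⟩
  map_one' := rfl
  map_mul' _ _ := rfl
  map_zero' := rfl
  map_add' _ _ := rfl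

lemma quotientMap_surjective : Function.Surjective (quotientMap e J) := by
  intro y
  obtain ⟨r, hr⟩ := RingCon.mk'_surjective J.ringCon y.1
  refine ⟨compress e r, Subtype.ext ?_⟩
  rw [← y.2, ← hr]
  rfl

end Corner

section CentrallyGenerated

open Corner

variable (e : R) [Fact (e * e = e)] (m : Ideal (Subring.center R))

lemma exists_sigmaHom_eq_compress_of_mem_span (hσ : Function.Surjective (sigmaHom e)) {x : R}
    (hx : x ∈ TwoSidedIdeal.span (Subtype.val '' (m : Set (Subring.center R)))) (a b : R) :
    ∃ w ∈ m, sigmaHom e w = compress e (a * x * b) := by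
  induction hx using TwoSidedIdeal.span_induction generalizing a b with
  | mem x hx =>
    obtain ⟨w, hw, rfl⟩ := hx
    obtain ⟨u, hu⟩ := hσ (compress e (a * b))
    refine ⟨w * u, m.mul_mem_right _ hw, ?_⟩
    rw [map_mul, hu, sigmaHom_mul_compress, Subring.mem_center_iff.mp w.2 a, mul_assoc]
  | zero => exact ⟨0, m.zero_mem, by rw [map_zero, mul_zero, zero_mul, map_zero]⟩
  | add x y _ _ hx hy =>
    obtain ⟨w₁, hw₁, h₁⟩ := hx a b
    obtain ⟨w₂, hw₂, h₂⟩ := hy a b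
    exact ⟨w₁ + w₂, m.add_mem hw₁ hw₂, by rw [map_add, h₁, h₂, ← map_add, mul_add, add_mul]⟩
  | neg x _ hx =>
    obtain ⟨w, hw, h⟩ := hx a b
    exact ⟨-w, m.neg_mem hw, by rw [map_neg, h, ← map_neg, mul_neg, neg_mul]⟩
  | left_absorb c x _ hx => simpa only [mul_assoc] using hx (a * c) b
  | right_absorb c x _ hx => simpa only [mul_assoc] using hx a (c * b)

lemma mul_idempotent_mem_span_iff (hσ : Function.Bijective (sigmaHom e))
    (z : Subring.center R) :
    z.1 * e ∈ TwoSidedIdeal.span (Subtype.val '' (m : Set (Subring.center R))) ↔ z ∈ m := by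
  refine ⟨fun hz => ?_, fun hz => TwoSidedIdeal.mul_mem_right _ _ _
    (TwoSidedIdeal.subset_span ⟨z, hz, rfl⟩)⟩
  obtain ⟨w, hw, h⟩ := exists_sigmaHom_eq_compress_of_mem_span e m hσ.2 hz 1 1
  rw [one_mul, mul_one, show z.1 * e = (sigmaHom e z).1 from rfl, compress_val] at h
  rwa [← hσ.1 h]

end CentrallyGenerated

/-- Let `e` be an idempotent of `R` such that `σ : Z(R) → eRe`,
`σ(z) = z·e`, is a ring isomorphism onto `eRe`. Let `m` be an ideal of `Z(R)` and `I`
the two-sided ideal of `R` generated by `m`. Then `σ` descends to a ring isomorphism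
`Z(R)/m ≅ (eRe)/(I ∩ eRe)`, and hence `Z(R)/m` is isomorphic as a ring to `ē(R/I)ē`,
the corner ring of `R/I` at the image `ē` of `e`. -/
theorem statement8 (e : R) (he : e * e = e)
    (hσ : haveI : Fact (e * e = e) := ⟨he⟩; Function.Bijective (sigmaHom e))
    (m : Ideal (Subring.center R)) :
    haveI : Fact (e * e = e) := ⟨he⟩
    letI I : TwoSidedIdeal R := TwoSidedIdeal.span (Subtype.val '' (m : Set (Subring.center R)))
    letI K : TwoSidedIdeal (Corner e) := TwoSidedIdeal.mk' {x : Corner e | x.1 ∈ I}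
      I.zero_mem (fun hx hy => I.add_mem hx hy) (fun hx => I.neg_mem hx)
      (fun hy => I.mul_mem_left _ _ hy) (fun hx => I.mul_mem_right _ _ hx)
    haveI : Fact ((e : I.ringCon.Quotient) * (e : I.ringCon.Quotient) = (e : I.ringCon.Quotient)) :=
      ⟨by rw [← RingCon.coe_mul, he]⟩
    (∃ τ : (Subring.center R ⧸ m) ≃+* K.ringCon.Quotient,
      ∀ z : Subring.center R,
        τ (Ideal.Quotient.mk m z) = ((sigmaHom e z : Corner e) : K.ringCon.Quotient)) ∧
    (∃ ρ : (Subring.center R ⧸ m) ≃+* Corner ((e : R) : I.ringCon.Quotient),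
      ∀ z : Subring.center R,
        (ρ (Ideal.Quotient.mk m z)).1 = ((z.1 * e : R) : I.ringCon.Quotient)) := by
  have : Fact (e * e = e) := ⟨he⟩
  set I := TwoSidedIdeal.span (Subtype.val '' (m : Set (Subring.center R)))
  have : Fact ((e : I.ringCon.Quotient) * e = e) := ⟨by rw [← RingCon.coe_mul, he]⟩
  have hmem := mul_idempotent_mem_span_iff e m hσ
  constructor
  · refine (RingCon.mk' _).comp (sigmaHom e) |>.exists_quotientEquiv_of_surjective
      ((RingCon.mk'_surjective _).comp hσ.2) m fun z => ?_
    rw [RingHom.comp_apply, RingCon.coe_mk', TwoSidedIdeal.coe_quotient_eq_zero_iff,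
      TwoSidedIdeal.mem_mk', ← hmem]
    rfl
  · obtain ⟨ρ, hρ⟩ := (Corner.quotientMap e I).comp (sigmaHom e)
      |>.exists_quotientEquiv_of_surjective ((Corner.quotientMap_surjective e I).comp hσ.2) m
        fun z => by
          rw [← hmem, ← TwoSidedIdeal.coe_quotient_eq_zero_iff]
          exact Subtype.ext_iff
    exact ⟨ρ, fun z => congrArg Subtype.val (hρ z)⟩
end

section
/- The determinant of the Jacobian matrix (∂Q_i/∂y_k)_{i,k} evaluated at the origin satisfies det( (∂Q_i/∂y_k)(0,…,0) ) = (k/k′)·∏_{H∈𝒜, b∉H} L_H(b)^{e_H−1}, and this value is nonzero. -/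
open Matrix MvPolynomial

/-- The action of an invertible matrix `w` on polynomials: `(w · f)(x) = f(w⁻¹x)`,
i.e. substitute `X i ↦ ∑ j (w⁻¹)_{ij} X j` in `f`. -/
noncomputable def glAct {n : ℕ} (w : GL (Fin n) ℂ) (f : MvPolynomial (Fin n) ℂ) :
    MvPolynomial (Fin n) ℂ :=
  aeval (fun i => ∑ j, C (((w⁻¹ : GL (Fin n) ℂ) : Matrix (Fin n) (Fin n) ℂ) i j) * X j) f

/-- Substituting `x_i + b_i` for `x_i`: `f ↦ f^{(b)}`, `f^{(b)}(x) = f(x + b)`. -/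
noncomputable def shift {n : ℕ} (b : Fin n → ℂ) (f : MvPolynomial (Fin n) ℂ) :
    MvPolynomial (Fin n) ℂ :=
  aeval (fun i => X i + C (b i)) f

/-- The linear form `v ↦ ∑ j c_j v_j` with coefficient vector `c`. -/
noncomputable def linForm {n : ℕ} (c : Fin n → ℂ) : (Fin n → ℂ) →ₗ[ℂ] ℂ where
  toFun v := ∑ j, c j * v j
  map_add' u v := by simp [mul_add, Finset.sum_add_distrib]
  map_smul' r v := by
    simp only [Pi.smul_apply, smul_eq_mul, RingHom.id_apply, Finset.mul_sum]
    exact Finset.sum_congr rfl fun j _ => by ring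

/-- The linear form with coefficient vector `c`, as a degree-one polynomial. -/
noncomputable def linPoly {n : ℕ} (c : Fin n → ℂ) : MvPolynomial (Fin n) ℂ :=
  ∑ j, C (c j) * X j

/-- The subspace of vectors fixed by `w`. -/
noncomputable def fixedSpace {n : ℕ} (w : GL (Fin n) ℂ) : Submodule ℂ (Fin n → ℂ) :=
  LinearMap.ker (Matrix.mulVecLin ((w : Matrix (Fin n) (Fin n) ℂ) - 1))

/-- `V` is a reflecting hyperplane of `W`: the fixed-point space of a pseudo-reflection
of `W` (an element whose fixed-point space is a hyperplane). -/
def IsReflectingHyperplane {n : ℕ} (W : Subgroup (GL (Fin n) ℂ))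
    (V : Submodule ℂ (Fin n → ℂ)) : Prop :=
  ∃ w ∈ W, fixedSpace w = V ∧ Module.finrank ℂ V = n - 1

/-- The subalgebra of polynomials invariant under the stabilizer
`W_b = {w ∈ W : w·b = b}`. -/
noncomputable def invariants {n : ℕ} (W : Subgroup (GL (Fin n) ℂ)) (b : Fin n → ℂ) :
    Subalgebra ℂ (MvPolynomial (Fin n) ℂ) where
  carrier := {f | ∀ w ∈ W, (w : Matrix (Fin n) (Fin n) ℂ) *ᵥ b = b → glAct w f = f}
  mul_mem' := by
    intro f g hf hg w hw hb
    have hf' := hf w hw hb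
    have hg' := hg w hw hb
    simp only [glAct] at hf' hg' ⊢
    rw [_root_.map_mul, hf', hg']
  add_mem' := by
    intro f g hf hg w hw hb
    have hf' := hf w hw hb
    have hg' := hg w hw hb
    simp only [glAct] at hf' hg' ⊢
    rw [_root_.map_add, hf', hg']
  algebraMap_mem' := by
    intro c w hw hb
    simp [glAct]

lemma chainRule {n : ℕ} (P : Fin n → MvPolynomial (Fin n) ℂ) (g : MvPolynomial (Fin n) ℂ)
    (j : Fin n) :
    pderiv j (aeval P g) = ∑ k, aeval P (pderiv k g) * pderiv j (P k) := by
  induction g using MvPolynomial.induction_on with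
  | C a => simp
  | add p q hp hq =>
    rw [map_add, map_add, hp, hq, ← Finset.sum_add_distrib]
    exact Finset.sum_congr rfl fun k _ => by simp [add_mul]
  | mul_X p i hp =>
    have key : ∀ k : Fin n, aeval P (pderiv k (p * X i)) * pderiv j (P k)
        = aeval P (pderiv k p) * P i * pderiv j (P k)
          + (if k = i then aeval P p * pderiv j (P i) else 0) := by
      intro k
      rcases eq_or_ne k i with rfl | hki
      · simp only [pderiv_mul, pderiv_X_self, mul_one, _root_.map_add, _root_.map_mul,
          aeval_X, if_pos rfl, eq_self_iff_true, if_true]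
        ring
      · simp only [pderiv_mul, pderiv_X_of_ne hki.symm, mul_zero, add_zero, _root_.map_mul,
          aeval_X, if_neg hki, add_zero]
    calc pderiv j (aeval P (p * X i))
        = pderiv j (aeval P p * P i) := by simp
      _ = pderiv j (aeval P p) * P i + aeval P p * pderiv j (P i) := pderiv_mul
      _ = (∑ k, aeval P (pderiv k p) * pderiv j (P k)) * P i
            + aeval P p * pderiv j (P i) := by rw [hp]
      _ = ∑ k, aeval P (pderiv k (p * X i)) * pderiv j (P k) := by
          rw [Finset.sum_congr rfl fun k _ => key k, Finset.sum_add_distrib,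
            Finset.sum_ite_eq' Finset.univ i fun _ => aeval P p * pderiv j (P i),
            Finset.sum_mul]
          simp [mul_assoc, mul_comm, mul_left_comm]

lemma pderiv_shift {n : ℕ} (b : Fin n → ℂ) (f : MvPolynomial (Fin n) ℂ) (j : Fin n) :
    pderiv j (shift b f) = shift b (pderiv j f) := by
  classical
  rw [show shift b f = aeval (fun i => X i + C (b i)) f from rfl, chainRule]
  rw [Finset.sum_eq_single j]
  · simp [shift]
  · intro k _ hk
    simp [pderiv_X_of_ne hk]
  · simp

lemma eval_aeval' {n : ℕ} (x : Fin n → ℂ) (P : Fin n → MvPolynomial (Fin n) ℂ)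
    (g : MvPolynomial (Fin n) ℂ) :
    eval x (aeval P g) = eval (fun i => eval x (P i)) g := by
  have hae : ∀ (y : Fin n → ℂ) (q : MvPolynomial (Fin n) ℂ), aeval y q = eval y q := by
    intro y q
    rw [← coe_aeval_eq_eval]
    rfl
  rw [← hae x (aeval P g), comp_aeval_apply P (aeval x) g]
  simp only [hae]

lemma shift_linPoly {n : ℕ} (b c : Fin n → ℂ) :
    shift b (linPoly c) = linPoly c + C (linForm c b) := by
  have h1 : shift b (linPoly c) = ∑ j, (C (c j) * X j + C (c j * b j)) := by
    simp [shift, linPoly, mul_add, C_mul]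
  rw [h1, Finset.sum_add_distrib, ← map_sum (C : ℂ →+* MvPolynomial (Fin n) ℂ)]
  rfl

lemma linPoly_ne_zero {n : ℕ} {c : Fin n → ℂ} (hc : c ≠ 0) : linPoly c ≠ 0 := by
  intro h
  apply hc
  funext j
  have := congrArg (eval (Pi.single j 1)) h
  classical
  simpa [linPoly, Pi.single_apply, Finset.sum_ite_eq'] using this

lemma eval_zero_linPoly {n : ℕ} (c : Fin n → ℂ) : eval (0 : Fin n → ℂ) (linPoly c) = 0 := by
  simp [linPoly]

open Classical in
/-- The determinant of the Jacobian matrix `(∂Q_i/∂y_k)` evaluated at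
the origin equals `(k/k′)·∏_{H∈𝒜, b∉H} L_H(b)^{e_H−1}`, and this value is nonzero. -/
theorem statement11
    {n : ℕ} (hn : 1 ≤ n)
    (W : Subgroup (GL (Fin n) ℂ)) [Finite W] (b : Fin n → ℂ)
    {ι : Type} [Fintype ι] (L : ι → (Fin n → ℂ)) (e : ι → ℕ)
    (hL0 : ∀ i, L i ≠ 0)
    (hLinj : Function.Injective fun i => LinearMap.ker (linForm (L i)))
    (hLrefl : ∀ i, IsReflectingHyperplane W (LinearMap.ker (linForm (L i))))
    (hLall : ∀ V, IsReflectingHyperplane W V → ∃ i, LinearMap.ker (linForm (L i)) = V)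
    (he : ∀ i, e i = Nat.card {w : W | ∀ v ∈ LinearMap.ker (linForm (L i)),
      ((w : GL (Fin n) ℂ) : Matrix (Fin n) (Fin n) ℂ) *ᵥ v = v})
    (F : Fin n → MvPolynomial (Fin n) ℂ) (hFalg : AlgebraicIndependent ℂ F)
    (hFinv : ∀ j, ∀ w ∈ W, glAct w (F j) = F j)
    (k : ℂ) (hk : k ≠ 0)
    (hFjac : (Matrix.of fun i j => pderiv j (F i)).det
      = C k * ∏ i : ι, linPoly (L i) ^ (e i - 1))
    (P : Fin n → MvPolynomial (Fin n) ℂ) (hPalg : AlgebraicIndependent ℂ P)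
    (hPinv : ∀ j, P j ∈ invariants W b)
    (hP0 : ∀ j, eval (0 : Fin n → ℂ) (P j) = 0)
    (hPgen : Algebra.adjoin ℂ (Set.range P) = invariants W b)
    (k' : ℂ) (hk' : k' ≠ 0)
    (hPjac : (Matrix.of fun i j => pderiv j (P i)).det
      = C k' * ∏ i ∈ Finset.univ.filter (fun i => linForm (L i) b = 0),
          linPoly (L i) ^ (e i - 1))
    (Q : Fin n → MvPolynomial (Fin n) ℂ)
    (hQ : ∀ i, shift b (F i) - C (eval b (F i)) = aeval P (Q i)) :
    (Matrix.of fun i j => eval (0 : Fin n → ℂ) (pderiv j (Q i))).det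
        = (k * k'⁻¹) * ∏ i ∈ Finset.univ.filter (fun i => linForm (L i) b ≠ 0),
            (linForm (L i) b) ^ (e i - 1) ∧
      (Matrix.of fun i j => eval (0 : Fin n → ℂ) (pderiv j (Q i))).det ≠ 0 := by
  classical
  set A : Matrix (Fin n) (Fin n) (MvPolynomial (Fin n) ℂ) :=
    Matrix.of fun i j => pderiv j (F i) with hA
  set B : Matrix (Fin n) (Fin n) (MvPolynomial (Fin n) ℂ) :=
    Matrix.of fun i j => pderiv j (P i) with hB
  set JQ : Matrix (Fin n) (Fin n) (MvPolynomial (Fin n) ℂ) :=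
    Matrix.of fun i j => aeval P (pderiv j (Q i)) with hJQ
  set φ : MvPolynomial (Fin n) ℂ →ₐ[ℂ] MvPolynomial (Fin n) ℂ :=
    aeval (fun i => X i + C (b i)) with hφ
  have hco : ⇑φ = shift b := funext fun _ => rfl
  -- chain rule in matrix form
  have hmap : A.map (shift b) = JQ * B := by
    refine Matrix.ext fun i j => ?_
    rw [Matrix.map_apply, Matrix.mul_apply]
    calc shift b (A i j) = pderiv j (shift b (F i)) := (pderiv_shift b (F i) j).symm
      _ = pderiv j (aeval P (Q i)) := by
          rw [show shift b (F i) = aeval P (Q i) + C (eval b (F i)) by rw [← hQ i]; ring,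
            map_add, pderiv_C, add_zero]
      _ = ∑ m, JQ i m * B m j := chainRule P (Q i) j
  have hdet : shift b A.det = JQ.det * B.det := by
    have h := AlgHom.map_det φ A
    rw [← hco, h, AlgHom.mapMatrix_apply, hco, hmap, det_mul]
  -- the two factors of the split product
  set Z : MvPolynomial (Fin n) ℂ :=
    ∏ i ∈ Finset.univ.filter (fun i => linForm (L i) b = 0), linPoly (L i) ^ (e i - 1) with hZdef
  set Rp : MvPolynomial (Fin n) ℂ :=
    ∏ i ∈ Finset.univ.filter (fun i => ¬ linForm (L i) b = 0),
      (linPoly (L i) + C (linForm (L i) b)) ^ (e i - 1) with hRpdef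
  have hprod : (∏ i : ι, (linPoly (L i) + C (linForm (L i) b)) ^ (e i - 1)) = Z * Rp := by
    rw [← Finset.prod_filter_mul_prod_filter_not Finset.univ (fun i => linForm (L i) b = 0)]
    congr 1
    exact Finset.prod_congr rfl fun i hi => by
      rw [(Finset.mem_filter.mp hi).2, map_zero, add_zero]
  have hφlin : ∀ c : Fin n → ℂ, φ (linPoly c) = linPoly c + C (linForm c b) := fun c => by
    rw [hco]; exact shift_linPoly b c
  have hφC : ∀ a : ℂ, φ (C a) = C a := fun a => by
    rw [hφ, aeval_C, algebraMap_eq]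
  have hshift : shift b A.det = C k * (Z * Rp) := by
    rw [← hco]
    rw [hFjac, _root_.map_mul, map_prod, hφC, ← hprod]
    congr 1
    exact Finset.prod_congr rfl fun i _ => by rw [map_pow, hφlin]
  have hZ0 : Z ≠ 0 :=
    Finset.prod_ne_zero_iff.mpr fun i _ => pow_ne_zero _ (linPoly_ne_zero (hL0 i))
  have hkey : C k * Rp = JQ.det * C k' := by
    apply mul_left_cancel₀ hZ0
    calc Z * (C k * Rp) = C k * (Z * Rp) := by ring
      _ = JQ.det * (C k' * Z) := by rw [← hshift, hdet, hPjac]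
      _ = Z * (JQ.det * C k') := by ring
  -- evaluate at 0
  set D : ℂ := (Matrix.of fun i j => eval (0 : Fin n → ℂ) (pderiv j (Q i))).det with hD
  have hevalJQ : eval (0 : Fin n → ℂ) JQ.det = D := by
    rw [RingHom.map_det]
    congr 1
    refine Matrix.ext fun i j => ?_
    show eval (0 : Fin n → ℂ) (aeval P (pderiv j (Q i))) = eval 0 (pderiv j (Q i))
    rw [eval_aeval', show (fun m => eval (0 : Fin n → ℂ) (P m)) = (0 : Fin n → ℂ) from
      funext fun m => hP0 m]
  set Pr : ℂ := ∏ i ∈ Finset.univ.filter (fun i => linForm (L i) b ≠ 0),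
      (linForm (L i) b) ^ (e i - 1) with hPr
  have hevalRp : eval (0 : Fin n → ℂ) Rp = Pr := by
    rw [hPr]
    rw [hRpdef, map_prod]
    refine Finset.prod_congr (by simp [ne_eq]) fun i _ => ?_
    rw [map_pow, map_add, eval_zero_linPoly, eval_C, zero_add]
  have heval := congrArg (eval (0 : Fin n → ℂ)) hkey
  rw [_root_.map_mul, _root_.map_mul, eval_C, eval_C, hevalRp, hevalJQ] at heval
  have h1 : D = (k * k'⁻¹) * Pr := by
    field_simp
    linear_combination -heval
  refine ⟨h1, ?_⟩
  rw [h1]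
  exact mul_ne_zero (mul_ne_zero hk (inv_ne_zero hk'))
    (Finset.prod_ne_zero_iff.mpr fun i hi =>
      pow_ne_zero _ ((Finset.mem_filter.mp hi).2))
end
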